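/- arXiv:2603.02326 — 3 statements merged into one kernel-verified Lean document; each statement's English description precedes it below -/
import Mathlib

section
/- The 3×3 matrix Ũ^(3) with rows (x²y², y(1−x²), x(1−y²)), (y(1−x²), x², 0), (x(1−y²), 0, y²), for 0 < x, y < 1, satisfies [(I − Ũ^(3))^{-1}]_{1,1} = 1/((1−x²)(1−y²)). -/
/-!
The lower-right `2 × 2` block of `1 - Ũ⁽³⁾` is `diag(1 - x², 1 - y²)`, so the `(0,0)` cofactor is
`(1 - x²)(1 - y²)`, and the Schur complement of that block,
`1 - x²y² - y²(1 - x²) - x²(1 - y²)`, is again `(1 - x²)(1 - y²)`. Hence the determinant is the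
square of the cofactor, and the `(0,0)` entry of the inverse is the reciprocal of the cofactor.
-/

section Transfer

variable {R : Type*} [CommRing R]

def fendleyTransfer (x y : R) : Matrix (Fin 3) (Fin 3) R :=
  !![x ^ 2 * y ^ 2, y * (1 - x ^ 2), x * (1 - y ^ 2);
     y * (1 - x ^ 2), x ^ 2, 0;
     x * (1 - y ^ 2), 0, y ^ 2]

theorem det_one_sub_fendleyTransfer (x y : R) :
    (1 - fendleyTransfer x y).det = ((1 - x ^ 2) * (1 - y ^ 2)) ^ 2 := by
  rw [Matrix.det_fin_three]
  simp only [fendleyTransfer, Matrix.sub_apply, Matrix.one_apply, Matrix.of_apply,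
    Matrix.cons_val_zero, Matrix.cons_val_one, Matrix.cons_val, Fin.reduceEq, if_true, if_false]
  ring

theorem adjugate_one_sub_fendleyTransfer_zero_zero (x y : R) :
    (1 - fendleyTransfer x y).adjugate 0 0 = (1 - x ^ 2) * (1 - y ^ 2) := by
  simp [fendleyTransfer, Matrix.adjugate_fin_three]

end Transfer

theorem Matrix.inv_apply_eq_inv_det_mul_adjugate {n K : Type*} [Fintype n] [DecidableEq n]
    [Field K] (A : Matrix n n K) (i j : n) : A⁻¹ i j = A.det⁻¹ * A.adjugate i j := by
  rw [Matrix.inv_def, Matrix.smul_apply, Ring.inverse_eq_inv', smul_eq_mul]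

/-- For `0 < x, y < 1`, the transfer-matrix block
`Ũ⁽³⁾ = [[x²y², y(1-x²), x(1-y²)], [y(1-x²), x², 0], [x(1-y²), 0, y²]]`
satisfies: `1 - Ũ⁽³⁾` is invertible and `[(1 - Ũ⁽³⁾)⁻¹]₁₁ = 1/((1-x²)(1-y²))`. -/
theorem fendley_szm_norm_transfer_entry (x y : ℝ)
    (hx0 : 0 < x) (hx1 : x < 1) (hy0 : 0 < y) (hy1 : y < 1) :
    let U : Matrix (Fin 3) (Fin 3) ℝ :=
      !![x ^ 2 * y ^ 2, y * (1 - x ^ 2), x * (1 - y ^ 2);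
         y * (1 - x ^ 2), x ^ 2, 0;
         x * (1 - y ^ 2), 0, y ^ 2]
    IsUnit (1 - U).det ∧ (1 - U)⁻¹ 0 0 = 1 / ((1 - x ^ 2) * (1 - y ^ 2)) := by
  change IsUnit (1 - fendleyTransfer x y).det ∧
    (1 - fendleyTransfer x y)⁻¹ 0 0 = 1 / ((1 - x ^ 2) * (1 - y ^ 2))
  have hcofactor : (1 - x ^ 2) * (1 - y ^ 2) ≠ 0 :=
    mul_ne_zero (by nlinarith) (by nlinarith)
  refine ⟨?_, ?_⟩
  · rw [det_one_sub_fendleyTransfer]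
    exact (pow_ne_zero 2 hcofactor).isUnit
  · rw [Matrix.inv_apply_eq_inv_det_mul_adjugate, det_one_sub_fendleyTransfer,
      adjugate_one_sub_fendleyTransfer_zero_zero]
    field_simp
end

section
/- On a chain of L qubits with open boundary conditions, the operator Ψ^ℓ(q) = Σ_{j=1}^L q^{j-1} (Π_{i=1}^{j-1} Z_i) X_j commutes with every generator T_{j,j+1} = X_j X_{j+1} + q Z_j for 1 ≤ j ≤ L−1, and also commutes with X_L. -/
open Matrix

/-- Pauli X matrix. -/
noncomputable def PX : Matrix (Fin 2) (Fin 2) ℂ := !![0, 1; 1, 0]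

/-- Pauli Y matrix. -/
noncomputable def PY : Matrix (Fin 2) (Fin 2) ℂ := !![0, -Complex.I; Complex.I, 0]

/-- Pauli Z matrix. -/
noncomputable def PZ : Matrix (Fin 2) (Fin 2) ℂ := !![1, 0; 0, -1]

/-- Tensor product of one-qubit operators `f i` across a chain of `L` qubits,
as a matrix on `(ℂ²)^{⊗L}` (indexed by `Fin L → Fin 2`). -/
noncomputable def prodOp (L : ℕ) (f : Fin L → Matrix (Fin 2) (Fin 2) ℂ) :
    Matrix (Fin L → Fin 2) (Fin L → Fin 2) ℂ :=
  Matrix.of fun a b => ∏ i, f i (a i) (b i)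

/-- A single-site operator `M` acting on site `j` of a chain of `L` qubits. -/
noncomputable def onSite (L : ℕ) (M : Matrix (Fin 2) (Fin 2) ℂ) (j : Fin L) :
    Matrix (Fin L → Fin 2) (Fin L → Fin 2) ℂ :=
  prodOp L (fun i => if i = j then M else 1)


/-- The Ising strong zero mode `Ψ^ℓ(q) = Σ_j q^{j-1} (Π_{i<j} Z_i) X_j` on a
chain of `L` qubits (here written as a tensor product with `Z` on sites
`i < j`, `X` on site `j`, identity elsewhere). -/
noncomputable def isingSZM (L : ℕ) (q : ℝ) :
    Matrix (Fin L → Fin 2) (Fin L → Fin 2) ℂ :=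
  ∑ j : Fin L, (q : ℂ) ^ (j : ℕ) •
    prodOp L (fun i => if i = j then PX else if i < j then PZ else 1)

/-! Write `Ψ = ∑ₖ qᵏ γₖ` with the Jordan–Wigner strings `γₖ = Z₀ ⋯ Zₖ₋₁ Xₖ`. For `k ∉ {j, j+1}`,
`γₖ` commutes with `T = Xⱼ Xⱼ₊₁ + q Zⱼ`: either it is the identity on sites `j, j+1`, or it
anticommutes with both `Xⱼ` and `Xⱼ₊₁` and commutes with `Zⱼ`. The two remaining terms form
`qʲ (γⱼ + q γⱼ₊₁)`, and the cross terms of its commutator with `T` cancel because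
`γⱼ Zⱼ = -γⱼ₊₁ Xⱼ Xⱼ₊₁` and `Zⱼ γⱼ = -Xⱼ Xⱼ₊₁ γⱼ₊₁`. Finally every `γₖ` is `X` or the identity on
the last site, so it commutes with the `X` there. -/

lemma PX_mul_PX : PX * PX = 1 := by
  simp [PX, Matrix.one_fin_two]

lemma PX_mul_PZ : PX * PZ = -(PZ * PX) := by
  simp [PX, PZ]

lemma commute_mul_of_anticomm {R : Type*} [Ring R] {a b c : R}
    (hb : a * b = -(b * a)) (hc : a * c = -(c * a)) : Commute a (b * c) := by
  rw [Commute, SemiconjBy, ← mul_assoc, hb, neg_mul, mul_assoc, hc, mul_neg, neg_neg, mul_assoc]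

lemma commute_add_smul_add_smul {S R : Type*} [CommRing S] [Ring R] [Algebra S R]
    {a b c d : R} (t : S) (hac : Commute a c) (hbd : Commute b d)
    (had : a * d = -(b * c)) (hda : d * a = -(c * b)) :
    Commute (a + t • b) (c + t • d) := by
  simp only [Commute, SemiconjBy, add_mul, mul_add, mul_smul_comm, smul_mul_assoc, had, hda,
    hac.eq, hbd.eq]
  module

section prodOp

variable {L : ℕ} {f g : Fin L → Matrix (Fin 2) (Fin 2) ℂ}

lemma prodOp_mul : prodOp L f * prodOp L g = prodOp L (fun i => f i * g i) := by
  ext a b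
  simp only [prodOp, Matrix.mul_apply, Matrix.of_apply]
  rw [← Fintype.piFinset_univ, Finset.prod_univ_sum]
  exact Finset.sum_congr rfl fun c _ => Finset.prod_mul_distrib.symm

lemma prodOp_commute (h : ∀ i, Commute (f i) (g i)) : Commute (prodOp L f) (prodOp L g) := by
  rw [Commute, SemiconjBy, prodOp_mul, prodOp_mul]
  exact congrArg _ (funext fun i => (h i).eq)

lemma prodOp_eq_neg_of_site (j : Fin L) (hj : f j = -g j) (h : ∀ i, i ≠ j → f i = g i) :
    prodOp L f = -prodOp L g := by
  ext a b
  simp only [prodOp, Matrix.of_apply, Matrix.neg_apply]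
  rw [← Finset.mul_prod_erase _ _ (Finset.mem_univ j),
    ← Finset.mul_prod_erase _ _ (Finset.mem_univ j), hj,
    Finset.prod_congr rfl fun i hi => by rw [h i (Finset.ne_of_mem_erase hi)]]
  simp

lemma prodOp_commute_onSite {M : Matrix (Fin 2) (Fin 2) ℂ} {j : Fin L} (h : Commute (f j) M) :
    Commute (prodOp L f) (onSite L M j) :=
  prodOp_commute fun i => by
    by_cases hi : i = j
    · subst hi; simpa using h
    · simp [hi]

lemma prodOp_mul_onSite_eq_neg {M : Matrix (Fin 2) (Fin 2) ℂ} {j : Fin L}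
    (h : f j * M = -(M * f j)) :
    prodOp L f * onSite L M j = -(onSite L M j * prodOp L f) := by
  rw [onSite, prodOp_mul, prodOp_mul]
  refine prodOp_eq_neg_of_site j (by simpa using h) fun i hi => ?_
  simp [hi]

end prodOp

noncomputable def majorana (L : ℕ) (k : Fin L) : Matrix (Fin L → Fin 2) (Fin L → Fin 2) ℂ :=
  prodOp L (fun i => if i = k then PX else if i < k then PZ else 1)

lemma isingSZM_eq_sum_majorana (L : ℕ) (q : ℝ) :
    isingSZM L q = ∑ k : Fin L, (q : ℂ) ^ (k : ℕ) • majorana L k :=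
  rfl

noncomputable def isingGenerator (L : ℕ) (q : ℝ) (j j' : Fin L) :
    Matrix (Fin L → Fin 2) (Fin L → Fin 2) ℂ :=
  onSite L PX j * onSite L PX j' + (q : ℂ) • onSite L PZ j

section majorana

variable {L : ℕ} {i j j' k : Fin L}

lemma majorana_commute_onSite_of_lt (h : k < i) (M : Matrix (Fin 2) (Fin 2) ℂ) :
    Commute (majorana L k) (onSite L M i) :=
  prodOp_commute_onSite (by simp [h.ne', h.not_gt])

lemma majorana_commute_onSite_PX_self : Commute (majorana L k) (onSite L PX k) :=
  prodOp_commute_onSite (by simp)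

lemma majorana_commute_onSite_PZ_of_lt (h : i < k) : Commute (majorana L k) (onSite L PZ i) :=
  prodOp_commute_onSite (by simp [h.ne, h])

lemma majorana_mul_onSite_PX_of_lt (h : i < k) :
    majorana L k * onSite L PX i = -(onSite L PX i * majorana L k) :=
  prodOp_mul_onSite_eq_neg (by simp [h.ne, h, PX_mul_PZ])

lemma majorana_mul_onSite_PZ_self :
    majorana L k * onSite L PZ k = -(onSite L PZ k * majorana L k) :=
  prodOp_mul_onSite_eq_neg (by simp [PX_mul_PZ])

lemma majorana_mul_onSite_PZ (hj' : (j' : ℕ) = j + 1) :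
    majorana L j * onSite L PZ j = -(majorana L j' * (onSite L PX j * onSite L PX j')) := by
  have hjj' : j < j' := by simp [Fin.lt_def, hj']
  rw [majorana, majorana, onSite, onSite, onSite, prodOp_mul, prodOp_mul, prodOp_mul]
  refine prodOp_eq_neg_of_site j (by simp [hjj', hjj'.ne, PX_mul_PZ]) fun i hi => ?_
  simp only [hi, if_false, mul_one]
  obtain hij | hji := lt_or_gt_of_ne hi
  · simp [hij, hij.trans hjj', (hij.trans hjj').ne]
  · have hj'i : j' ≤ i := Fin.le_def.2 (by rw [Fin.lt_def] at hji; omega)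
    obtain rfl | hj'i := hj'i.eq_or_lt
    · simp [hjj'.not_gt, PX_mul_PX]
    · simp [hji.not_gt, hj'i.ne', hj'i.not_gt]

lemma onSite_PZ_mul_majorana (hj' : (j' : ℕ) = j + 1) :
    onSite L PZ j * majorana L j = -(onSite L PX j * onSite L PX j' * majorana L j') := by
  have hjj' : j < j' := by simp [Fin.lt_def, hj']
  calc onSite L PZ j * majorana L j
      = -(majorana L j * onSite L PZ j) := by rw [majorana_mul_onSite_PZ_self, neg_neg]
    _ = majorana L j' * (onSite L PX j * onSite L PX j') := by
      rw [majorana_mul_onSite_PZ hj', neg_neg]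
    _ = -(onSite L PX j * onSite L PX j' * majorana L j') := by
      rw [← mul_assoc, majorana_mul_onSite_PX_of_lt hjj', neg_mul, mul_assoc,
        majorana_commute_onSite_PX_self.eq, mul_assoc]

lemma majorana_commute_isingGenerator_of_lt (q : ℝ) (hkj : k < j) (hjj' : j < j') :
    Commute (majorana L k) (isingGenerator L q j j') :=
  ((majorana_commute_onSite_of_lt hkj _).mul_right
    (majorana_commute_onSite_of_lt (hkj.trans hjj') _)).add_right
    ((majorana_commute_onSite_of_lt hkj _).smul_right _)

lemma majorana_commute_isingGenerator_of_gt (q : ℝ) (hjk : j < k) (hj'k : j' < k) :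
    Commute (majorana L k) (isingGenerator L q j j') :=
  (commute_mul_of_anticomm (majorana_mul_onSite_PX_of_lt hjk)
    (majorana_mul_onSite_PX_of_lt hj'k)).add_right
    ((majorana_commute_onSite_PZ_of_lt hjk).smul_right _)

lemma majorana_add_smul_commute_isingGenerator (q : ℝ) (hj' : (j' : ℕ) = j + 1) :
    Commute (majorana L j + (q : ℂ) • majorana L j') (isingGenerator L q j j') := by
  have hjj' : j < j' := by simp [Fin.lt_def, hj']
  exact commute_add_smul_add_smul _
    (majorana_commute_onSite_PX_self.mul_right (majorana_commute_onSite_of_lt hjj' _))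
    (majorana_commute_onSite_PZ_of_lt hjj') (majorana_mul_onSite_PZ hj')
    (onSite_PZ_mul_majorana hj')

end majorana

theorem isingSZM_commute_isingGenerator {L : ℕ} (q : ℝ) {j j' : Fin L}
    (hj' : (j' : ℕ) = j + 1) : Commute (isingSZM L q) (isingGenerator L q j j') := by
  have hjj' : j < j' := by simp [Fin.lt_def, hj']
  rw [isingSZM_eq_sum_majorana, ← Finset.add_sum_erase _ _ (Finset.mem_univ j),
    ← Finset.add_sum_erase _ _ (Finset.mem_erase.2 ⟨hjj'.ne', Finset.mem_univ j'⟩), ← add_assoc]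
  refine Commute.add_left ?_ (Commute.sum_left _ _ _ fun k hk => ?_)
  · rw [hj', pow_succ, ← smul_smul, ← smul_add]
    exact (majorana_add_smul_commute_isingGenerator q hj').smul_left _
  · obtain ⟨hkj', hkj, -⟩ := Finset.mem_erase.1 hk |>.imp_right Finset.mem_erase.1
    refine Commute.smul_left ?_ _
    obtain hkj | hjk := lt_or_gt_of_ne hkj
    · exact majorana_commute_isingGenerator_of_lt q hkj hjj'
    · have hj'k : j' ≤ k := Fin.le_def.2 (by rw [Fin.lt_def] at hjk; omega)
      exact majorana_commute_isingGenerator_of_gt q hjk (hj'k.lt_of_ne hkj'.symm)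

theorem isingSZM_commute_onSite_PX_of_isTop {L : ℕ} (q : ℝ) {l : Fin L} (hl : IsTop l) :
    Commute (isingSZM L q) (onSite L PX l) :=
  Commute.sum_left _ _ _ fun k _ => Commute.smul_left (by
    obtain rfl | hkl := (hl k).eq_or_lt
    exacts [majorana_commute_onSite_PX_self, majorana_commute_onSite_of_lt hkl _]) _

/-- The Ising strong zero mode commutes with every generator
`T_{j,j+1} = X_j X_{j+1} + q Z_j` (for `1 ≤ j ≤ L-1`) and with `X_L`. -/
theorem ising_szm_commutes (L : ℕ) (hL : 0 < L) (q : ℝ) :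
    (∀ (j : Fin L) (hj : (j : ℕ) + 1 < L),
        isingSZM L q *
            (onSite L PX j * onSite L PX ⟨(j : ℕ) + 1, hj⟩ + (q : ℂ) • onSite L PZ j) =
          (onSite L PX j * onSite L PX ⟨(j : ℕ) + 1, hj⟩ + (q : ℂ) • onSite L PZ j) *
            isingSZM L q) ∧
      isingSZM L q * onSite L PX ⟨L - 1, by omega⟩ =
        onSite L PX ⟨L - 1, by omega⟩ * isingSZM L q :=
  ⟨fun _ _ => (isingSZM_commute_isingGenerator q rfl).eq,
    (isingSZM_commute_onSite_PX_of_isTop q fun k => Fin.le_def.2 (Nat.le_sub_one_of_lt k.isLt)).eq⟩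
end

section
/- The L×L matrix P with P_{jj} = 4q(q + q^{-1}) for 2 ≤ j ≤ L−1, P_{11} = 4q·q, P_{LL} = 4q·q^{-1}, and P_{j,j+1} = P_{j+1,j} = −4q for 1 ≤ j ≤ L−1 (all other entries zero) has the vector v_j = q^{j-1} as an eigenvector with eigenvalue 0, and has eigenvalues λ_m = 4[q² + 1 − 2q cos(mπ/L)] for m = 1, ..., L−1. -/
/-!
The zero mode `q ^ j` and the standing waves `sin ((j + 1) θ) - q⁻¹ sin (j θ)` both solve a
three-term recurrence `f (k - 1) + f (k + 1) = c f k` on all of `ℤ`. The corner entries of the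
matrix are exactly what the bulk row formula `4q ((q + q⁻¹) f j - f (j - 1) - f (j + 1))` produces
once the ghost values outside `0, …, L - 1` satisfy `f (-1) = q⁻¹ f 0` and `f L = q f (L - 1)`,
so such an `f` is an eigenvector with eigenvalue `4q (q + q⁻¹ - c)`. The left condition holds for
both families, and for the standing wave the right one follows from `sin (L θ) = 0`.
-/

open Matrix Module End

section Tridiagonal

variable {R : Type*} [CommRing R] {n : ℕ}

def tridiagonal (d : Fin n → R) (b : R) : Matrix (Fin n) (Fin n) R :=
  Matrix.of fun i j =>
    if (i : ℕ) = (j : ℕ) then d i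
    else if (i : ℕ) + 1 = (j : ℕ) ∨ (j : ℕ) + 1 = (i : ℕ) then b else 0

theorem Fin.sum_ite_intCast_eq (f : ℤ → R) (k : ℤ) :
    ∑ j : Fin n, (if (j : ℤ) = k then f j else 0) = if 0 ≤ k ∧ k < n then f k else 0 := by
  split_ifs with hk
  · rw [Finset.sum_eq_single_of_mem (⟨k.toNat, by omega⟩ : Fin n) (Finset.mem_univ _)]
    · simp [hk.1]
    · intro j _ hj
      exact if_neg fun h => hj (Fin.ext (by simp; omega))
  · exact Finset.sum_eq_zero fun j _ => if_neg (by omega)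

theorem tridiagonal_mulVec_apply (d : Fin n → R) (b : R) (f : ℤ → R) (i : Fin n) :
    (tridiagonal d b *ᵥ fun j => f j) i =
      d i * f i + b * ((if 0 < (i : ℕ) then f (i - 1) else 0) +
        if (i : ℕ) + 1 < n then f (i + 1) else 0) := by
  have entry : ∀ j : Fin n, tridiagonal d b i j * f j =
      (if (j : ℤ) = i then d i * f j else 0) + (if (j : ℤ) = i - 1 then b * f j else 0) +
        (if (j : ℤ) = i + 1 then b * f j else 0) := by
    intro j
    simp only [tridiagonal, Matrix.of_apply]
    split_ifs <;> first | omega | ring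
  simp only [mulVec, dotProduct, entry, Finset.sum_add_distrib]
  rw [Fin.sum_ite_intCast_eq (fun x => d i * f x), Fin.sum_ite_intCast_eq (fun x => b * f x),
    Fin.sum_ite_intCast_eq (fun x => b * f x)]
  split_ifs <;> first | omega | ring

end Tridiagonal

theorem Real.sin_sub_add_sin_add (x y : ℝ) :
    Real.sin (x - y) + Real.sin (x + y) = 2 * Real.cos y * Real.sin x := by
  rw [← Real.two_mul_sin_mul_cos]; ring

noncomputable def isingSZMMatrix (L : ℕ) (q : ℝ) : Matrix (Fin L) (Fin L) ℝ :=
  tridiagonal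
    (fun i => if (i : ℕ) = 0 then 4 * q * q
      else if (i : ℕ) = L - 1 then 4 * q * q⁻¹ else 4 * q * (q + q⁻¹))
    (-(4 * q))

theorem isingSZMMatrix_mulVec_eq_smul {L : ℕ} (hL : 2 ≤ L) (q c : ℝ) (f : ℤ → ℝ)
    (hrec : ∀ k, f (k - 1) + f (k + 1) = c * f k)
    (hleft : f (-1) = q⁻¹ * f 0) (hright : f L = q * f (L - 1)) :
    isingSZMMatrix L q *ᵥ (fun j => f j) = (4 * q * (q + q⁻¹ - c)) • fun j : Fin L => f j := by
  funext i
  rw [isingSZMMatrix, tridiagonal_mulVec_apply, Pi.smul_apply, smul_eq_mul]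
  have hrec_i := hrec i
  by_cases h0 : (i : ℕ) = 0
  · have hleft_i : f ((i : ℕ) - 1 : ℤ) = q⁻¹ * f (i : ℕ) := by
      rw [h0]; simpa using hleft
    rw [if_pos h0, if_neg (by omega), if_pos (by omega)]
    linear_combination (-4 * q) * hrec_i + 4 * q * hleft_i
  by_cases hlast : (i : ℕ) = L - 1
  · have hright_i : f ((i : ℕ) + 1 : ℤ) = q * f (i : ℕ) := by
      rw [show ((i : ℕ) : ℤ) = L - 1 by omega, sub_add_cancel]; exact hright
    rw [if_neg h0, if_pos hlast, if_pos (by omega), if_neg (by omega)]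
    linear_combination (-4 * q) * hrec_i + 4 * q * hright_i
  · rw [if_neg h0, if_neg hlast, if_pos (by omega), if_pos (by omega)]
    linear_combination (-4 * q) * hrec_i

theorem isingSZMMatrix_mulVec_pow {L : ℕ} (hL : 2 ≤ L) {q : ℝ} (hq : q ≠ 0) :
    isingSZMMatrix L q *ᵥ (fun j => q ^ (j : ℕ)) = 0 := by
  have h := isingSZMMatrix_mulVec_eq_smul hL q (q + q⁻¹) (fun k => q ^ k)
    (fun k => by rw [zpow_sub_one₀ hq, zpow_add_one₀ hq]; field_simp; ring)
    (by simp) (by rw [zpow_sub_one₀ hq, zpow_natCast]; field_simp)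
  simpa using h

theorem isingSZMMatrix_hasEigenvalue {L : ℕ} (hL : 2 ≤ L) {q : ℝ} (hq : q ≠ 0) {θ : ℝ}
    (hLθ : Real.sin (L * θ) = 0) (hθ : Real.sin θ ≠ 0) :
    HasEigenvalue (toLin' (isingSZMMatrix L q)) (4 * (q ^ 2 + 1 - 2 * q * Real.cos θ)) := by
  set f : ℤ → ℝ := fun k => Real.sin ((k + 1) * θ) - q⁻¹ * Real.sin (k * θ) with hf
  have hrec : ∀ k, f (k - 1) + f (k + 1) = 2 * Real.cos θ * f k := by
    intro k
    have h₁ := Real.sin_sub_add_sin_add ((k + 1) * θ) θ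
    have h₂ := Real.sin_sub_add_sin_add (k * θ) θ
    simp only [hf]
    push_cast
    rw [show ((k : ℝ) - 1 + 1) * θ = k * θ by ring, show ((k : ℝ) - 1) * θ = k * θ - θ by ring,
      show ((k : ℝ) + 1 + 1) * θ = (k + 1) * θ + θ by ring]
    rw [show ((k : ℝ) + 1) * θ - θ = k * θ by ring] at h₁
    rw [show (k : ℝ) * θ + θ = (k + 1) * θ by ring] at h₂
    linear_combination h₁ - q⁻¹ * h₂
  have hright : f L = q * f (L - 1) := by
    have h := Real.sin_sub_add_sin_add (L * θ) θ
    simp only [hf]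
    push_cast
    rw [show ((L : ℝ) - 1 + 1) * θ = L * θ by ring, show ((L : ℝ) - 1) * θ = L * θ - θ by ring,
      show ((L : ℝ) + 1) * θ = L * θ + θ by ring]
    rw [hLθ] at h ⊢
    linear_combination h + Real.sin (L * θ - θ) * mul_inv_cancel₀ hq
  have hmulVec := isingSZMMatrix_mulVec_eq_smul hL q _ f hrec (by simp [hf]) hright
  refine hasEigenvalue_of_hasEigenvector (x := fun j => f j) ⟨?_, ?_⟩
  · rw [mem_eigenspace_iff, toLin'_apply, hmulVec]
    congr 1
    field_simp
  · intro h0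
    exact hθ (by simpa [hf] using congrFun h0 ⟨0, by omega⟩)

/-- Spectrum of the Ising-SZM super-Hamiltonian restricted to single-Majorana
operators: the tridiagonal matrix with diagonal `4q·q, 4q(q+q⁻¹), …, 4q·q⁻¹`
and off-diagonal entries `-4q` has `v_j = q^{j-1}` as a zero mode and
eigenvalues `λ_m = 4[q² + 1 - 2q cos(mπ/L)]` for `m = 1, …, L-1`. -/
theorem ising_szm_superhamiltonian_spectrum (L : ℕ) (hL : 2 ≤ L) (q : ℝ)
    (hq : 0 < q) :
    let P : Matrix (Fin L) (Fin L) ℝ := Matrix.of fun i j =>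
      if (i : ℕ) = (j : ℕ) then
        (if (i : ℕ) = 0 then 4 * q * q
         else if (i : ℕ) = L - 1 then 4 * q * q⁻¹
         else 4 * q * (q + q⁻¹))
      else if (i : ℕ) + 1 = (j : ℕ) ∨ (j : ℕ) + 1 = (i : ℕ) then -(4 * q) else 0
    P.mulVec (fun j => q ^ (j : ℕ)) = 0 ∧
      ∀ m : ℕ, 1 ≤ m → m ≤ L - 1 →
        Module.End.HasEigenvalue (Matrix.toLin' P)
          (4 * (q ^ 2 + 1 - 2 * q * Real.cos (m * Real.pi / L))) := by
  intro P
  change isingSZMMatrix L q *ᵥ _ = 0 ∧ ∀ m : ℕ, 1 ≤ m → m ≤ L - 1 →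
    HasEigenvalue (toLin' (isingSZMMatrix L q)) _
  refine ⟨isingSZMMatrix_mulVec_pow hL hq.ne', fun m hm hmL => ?_⟩
  have hL0 : (L : ℝ) ≠ 0 := by positivity
  refine isingSZMMatrix_hasEigenvalue hL hq.ne' ?_ ?_
  · rw [mul_div_cancel₀ _ hL0]; exact Real.sin_nat_mul_pi m
  · refine (Real.sin_pos_of_pos_of_lt_pi (by positivity) ?_).ne'
    rw [div_lt_iff₀ (by positivity), mul_comm]
    exact mul_lt_mul_of_pos_left (by exact_mod_cast (by omega : m < L)) Real.pi_pos
end
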